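/- For all real numbers τ > 0 and ν > 0, the modified Bessel function of the second kind satisfies τ^ν · K_ν(τ) ≤ Γ(ν) · 2^(ν−1), where K_ν(τ) = (1/2) ∫₀^∞ y^(ν−1) e^(−(τ/2)(y + y⁻¹)) dy. -/

import Mathlib

open Real MeasureTheory

/-- The modified Bessel function of the second kind,
`K_ν(τ) = (1/2) ∫₀^∞ y^(ν−1) exp(−(τ/2)(y + 1/y)) dy`. -/
noncomputable def besselK (ν τ : ℝ) : ℝ :=
  (1 / 2) * ∫ y in Set.Ioi (0 : ℝ), y ^ (ν - 1) * Real.exp (-(τ / 2) * (y + y⁻¹))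

open Set

/-!
Since `y⁻¹ > 0`, dropping it from the exponent only enlarges the integrand, so
`2 K_ν(τ) ≤ ∫₀^∞ y^(ν−1) e^(−τy/2) dy = (2/τ)^ν Γ(ν)`, and multiplying by `τ^ν / 2` gives the claim.
-/

lemma integrableOn_rpow_mul_exp_neg_mul_Ioi {a r : ℝ} (ha : 0 < a) (hr : 0 < r) :
    IntegrableOn (fun t : ℝ => t ^ (a - 1) * exp (-(r * t))) (Ioi 0) :=
  (integrableOn_rpow_mul_exp_neg_mul_rpow (s := a - 1) (by linarith) one_pos hr).congr_fun
    (fun t _ => by simp only [rpow_one, neg_mul]) measurableSet_Ioi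

lemma exp_neg_mul_add_inv_le {r y : ℝ} (hr : 0 ≤ r) (hy : 0 < y) :
    exp (-r * (y + y⁻¹)) ≤ exp (-(r * y)) := by
  have : 0 ≤ r * y⁻¹ := by positivity
  exact exp_le_exp.2 (by linarith [mul_add r y y⁻¹])

lemma integral_rpow_mul_exp_neg_mul_add_inv_le {a r : ℝ} (ha : 0 < a) (hr : 0 < r) :
    ∫ t in Ioi (0 : ℝ), t ^ (a - 1) * exp (-r * (t + t⁻¹)) ≤ (1 / r) ^ a * Gamma a := by
  have hle : ∀ t ∈ Ioi (0 : ℝ), t ^ (a - 1) * exp (-r * (t + t⁻¹)) ≤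
      t ^ (a - 1) * exp (-(r * t)) := fun t ht =>
    mul_le_mul_of_nonneg_left (exp_neg_mul_add_inv_le hr.le ht) (rpow_nonneg (le_of_lt ht) _)
  have hdom := integrableOn_rpow_mul_exp_neg_mul_Ioi ha hr
  have hint : IntegrableOn (fun t : ℝ => t ^ (a - 1) * exp (-r * (t + t⁻¹))) (Ioi 0) := by
    refine hdom.mono' (by fun_prop) ?_
    filter_upwards [self_mem_ae_restrict measurableSet_Ioi] with t ht
    rw [norm_of_nonneg (by have : (0 : ℝ) < t := ht; positivity)]
    exact hle t ht
  rw [← integral_rpow_mul_exp_neg_mul_Ioi ha hr]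
  exact setIntegral_mono_on hint hdom measurableSet_Ioi hle

/-- For all `τ > 0` and `ν > 0`, `τ^ν · K_ν(τ) ≤ Γ(ν) · 2^(ν−1)`. -/
theorem stmt0 (τ ν : ℝ) (hτ : 0 < τ) (hν : 0 < ν) :
    τ ^ ν * besselK ν τ ≤ Real.Gamma ν * (2 : ℝ) ^ (ν - 1) := by
  calc τ ^ ν * besselK ν τ ≤ τ ^ ν * (1 / 2 * ((1 / (τ / 2)) ^ ν * Gamma ν)) := by
        unfold besselK
        gcongr
        exact integral_rpow_mul_exp_neg_mul_add_inv_le hν (half_pos hτ)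
    _ = Gamma ν * 2 ^ (ν - 1) := by
      rw [one_div_div, div_rpow zero_le_two hτ.le, rpow_sub_one two_ne_zero]
      field_simp
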